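/- Let ℓ be a prime, m a natural number, G a cyclic group of order ℓ^m, and V, W two finite-dimensional representations of G over ℚ_ℓ. If dim_{ℚ_ℓ} V^H = dim_{ℚ_ℓ} W^H for every subgroup H of G (where V^H denotes the subspace of H-fixed vectors), then V and W are isomorphic as ℚ_ℓ-representations of G. -/

import Mathlib

/-- The subspace `V^H` of `H`-fixed vectors of a representation. -/
noncomputable abbrev fixedSubspace {k G V : Type} [CommRing k] [Group G]
    [AddCommGroup V] [Module k V] (ρ : Representation k G V) (H : Subgroup G) :
    Submodule k V :=
  ⨅ h ∈ H, LinearMap.ker (ρ h - LinearMap.id)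

/-!
Let `g` generate `G` and put `A = ρ g`. The subgroups of `G` are the `⟨g ^ ℓ ^ j⟩`, with fixed
subspaces `ker (A ^ ℓ ^ j - 1)`, and `X ^ ℓ ^ j - 1 = ∏_{i ≤ j} Φ_{ℓ^i}` with pairwise coprime
factors, so the dimensions of the fixed subspaces determine those of the primary components
`ker Φ_{ℓ^i}(A)`. After `X ↦ X + 1`, `Φ_{ℓ^i}` is Eisenstein at `ℓ`, hence irreducible over `ℚ_ℓ`;
so `ker Φ_{ℓ^i}(A)` is a vector space over the field `ℚ_ℓ[X]/(Φ_{ℓ^i})`, determined up to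
isomorphism by its `ℚ_ℓ`-dimension. The isomorphisms of the primary components of `V` and `W`
add up to an isomorphism of `ℚ_ℓ[X]`-modules, that is, a `ℚ_ℓ`-linear isomorphism conjugating
`ρV g` to `ρW g`, and hence intertwining the whole of `G`.
-/

open Function Polynomial Module Submodule

namespace Polynomial

theorem irreducible_cyclotomic_prime_pow_of_prime {R K : Type*} [CommRing R] [IsDomain R]
    [IsIntegrallyClosed R] [Field K] [Algebra R K] [IsFractionRing R K]
    (ℓ : ℕ) [Fact ℓ.Prime] (hℓ : Prime (ℓ : R)) (i : ℕ) :
    Irreducible (cyclotomic (ℓ ^ i) K) := by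
  obtain _ | n := i
  · simpa using irreducible_X_sub_C (1 : K)
  set f := (cyclotomic (ℓ ^ (n + 1)) R).comp (X + C 1)
  have hmap : ((cyclotomic (ℓ ^ (n + 1)) ℤ).comp (X + 1)).map (Int.castRingHom R) = f := by
    simp [f, Polynomial.map_comp]
  have hmonic : f.Monic := (cyclotomic.monic _ R).comp_X_add_C 1
  have hmem := (cyclotomic_prime_pow_comp_X_add_one_isEisensteinAt ℓ n).isWeaklyEisensteinAt.map
    (Int.castRingHom R)
  rw [hmap, Ideal.submodule_span_eq, Ideal.map_span, Set.image_singleton, map_natCast] at hmem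
  have hcoeff : f.coeff 0 = ℓ := by
    simp [f, coeff_zero_eq_eval_zero, eval_comp, eval_one_cyclotomic_prime_pow]
  have hEis : f.IsEisensteinAt (Ideal.span {(ℓ : R)}) := by
    refine hmonic.isEisensteinAt_of_mem_of_notMem ?_ hmem.mem ?_
    · rw [Ne, Ideal.span_singleton_eq_top]
      exact hℓ.not_isUnit
    · rw [hcoeff, Ideal.span_singleton_pow, Ideal.mem_span_singleton, pow_two]
      exact fun h ↦ hℓ.not_isUnit <| isUnit_of_dvd_one <|
        (mul_dvd_mul_iff_left hℓ.ne_zero).mp <| by rwa [mul_one]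
  have hdeg : 0 < f.natDegree := by
    rw [natDegree_comp, natDegree_X_add_C, natDegree_cyclotomic, mul_one]
    exact Nat.totient_pos.mpr (pow_pos (Fact.out : ℓ.Prime).pos _)
  have hirr : Irreducible (cyclotomic (ℓ ^ (n + 1)) R) :=
    (MulEquiv.irreducible_iff (algEquivAevalXAddC (1 : R))).mp <|
      hEis.irreducible ((Ideal.span_singleton_prime hℓ.ne_zero).mpr hℓ) hmonic.isPrimitive hdeg
  simpa using
    (cyclotomic.monic _ R).irreducible_iff_irreducible_map_fraction_map (K := K) |>.mp hirr

theorem prod_range_cyclotomic_prime_pow (R : Type*) [CommRing R] (ℓ : ℕ) [Fact ℓ.Prime]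
    (m : ℕ) : ∏ i ∈ Finset.range (m + 1), cyclotomic (ℓ ^ i) R = X ^ ℓ ^ m - 1 := by
  rw [← Nat.prod_divisors_prime_pow (f := (cyclotomic · R)) Fact.out,
    prod_cyclotomic_eq_X_pow_sub_one (pow_pos (Fact.out : ℓ.Prime).pos m)]

variable {k : Type*} [Field k] [CharZero k]

theorem isCoprime_cyclotomic_prime_pow_succ_X_pow_sub_one (ℓ : ℕ) [Fact ℓ.Prime] (i : ℕ) :
    IsCoprime (cyclotomic (ℓ ^ (i + 1)) k) (X ^ ℓ ^ i - 1) := by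
  refine Separable.isCoprime ?_
  rw [cyclotomic_prime_pow_mul_X_pow_sub_one, X_pow_sub_one_separable_iff]
  exact_mod_cast (pow_pos (Fact.out : ℓ.Prime).pos _).ne'

theorem pairwise_isCoprime_cyclotomic_pow {ℓ : ℕ} (hℓ : 2 ≤ ℓ) :
    Pairwise (IsCoprime on fun i ↦ cyclotomic (ℓ ^ i) k) := fun _ _ hij ↦ by
  simpa using (cyclotomic.isCoprime_rat ((Nat.pow_right_injective hℓ).ne hij)).map
    (mapRingHom (algebraMap ℚ k))

end Polynomial

section KernelDimensions

variable {k V W : Type*} [Field k] [AddCommGroup V] [Module k V] [FiniteDimensional k V]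
  [AddCommGroup W] [Module k W] [FiniteDimensional k W]

theorem finrank_ker_aeval_mul_of_isCoprime (A : End k V) {p q : k[X]} (hpq : IsCoprime p q) :
    finrank k (LinearMap.ker (aeval A (p * q))) =
      finrank k (LinearMap.ker (aeval A p)) + finrank k (LinearMap.ker (aeval A q)) := by
  rw [← sup_ker_aeval_eq_ker_aeval_mul_of_coprime A hpq, ← finrank_sup_add_finrank_inf_eq,
    (disjoint_ker_aeval_of_isCoprime A hpq).eq_bot, finrank_bot, add_zero]

theorem finrank_ker_aeval_cyclotomic_prime_pow_eq [CharZero k] (A : End k V) (B : End k W)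
    (ℓ : ℕ) [Fact ℓ.Prime]
    (h : ∀ j : ℕ, finrank k (LinearMap.ker (aeval A (X ^ ℓ ^ j - 1 : k[X]))) =
      finrank k (LinearMap.ker (aeval B (X ^ ℓ ^ j - 1 : k[X])))) (i : ℕ) :
    finrank k (LinearMap.ker (aeval A (cyclotomic (ℓ ^ i) k))) =
      finrank k (LinearMap.ker (aeval B (cyclotomic (ℓ ^ i) k))) := by
  obtain _ | i := i
  · have h₀ := h 0
    rw [pow_zero, pow_one] at h₀
    rwa [pow_zero, cyclotomic_one]
  have hA := finrank_ker_aeval_mul_of_isCoprime A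
    (isCoprime_cyclotomic_prime_pow_succ_X_pow_sub_one (k := k) ℓ i)
  have hB := finrank_ker_aeval_mul_of_isCoprime B
    (isCoprime_cyclotomic_prime_pow_succ_X_pow_sub_one (k := k) ℓ i)
  rw [cyclotomic_prime_pow_mul_X_pow_sub_one] at hA hB
  have := h i
  have := h (i + 1)
  omega

end KernelDimensions

instance Submodule.finiteDimensional_of_isScalarTower {k R M : Type*} [Field k] [Ring R]
    [SMul k R] [AddCommGroup M] [Module k M] [Module R M] [IsScalarTower k R M]
    [FiniteDimensional k M] (p : Submodule R M) : FiniteDimensional k p :=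
  inferInstanceAs (FiniteDimensional k (p.restrictScalars k))

section TorsionModules

variable {k M N : Type*} [Field k] [AddCommGroup M] [Module k[X] M] [Module k M]
  [IsScalarTower k k[X] M] [FiniteDimensional k M] [AddCommGroup N] [Module k[X] N] [Module k N]
  [IsScalarTower k k[X] N] [FiniteDimensional k N]

theorem nonempty_linearEquiv_torsionBy_of_irreducible {q : k[X]} (hq : Irreducible q)
    (h : finrank k (torsionBy k[X] M q) = finrank k (torsionBy k[X] N q)) :
    Nonempty (torsionBy k[X] M q ≃ₗ[k[X]] torsionBy k[X] N q) := by
  have : (Ideal.span {q}).IsMaximal := PrincipalIdealRing.isMaximal_of_irreducible hq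
  let K := k[X] ⧸ Ideal.span {q}
  let : Field K := Ideal.Quotient.field _
  have : FiniteDimensional k K := (AdjoinRoot.powerBasis hq.ne_zero).finite
  have : Module.Finite K (torsionBy k[X] M q) := Module.Finite.right k K _
  have : Module.Finite K (torsionBy k[X] N q) := Module.Finite.right k K _
  have hK : finrank K (torsionBy k[X] M q) = finrank K (torsionBy k[X] N q) := by
    refine Nat.eq_of_mul_eq_mul_left (finrank_pos (R := k) (M := K)) ?_
    rwa [finrank_mul_finrank, finrank_mul_finrank]
  exact ⟨(LinearEquiv.ofFinrankEq _ _ hK).restrictScalars k[X]⟩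

theorem nonempty_linearEquiv_of_isTorsionBy_prod {ι : Type*} [DecidableEq ι] {S : Finset ι}
    {q : ι → k[X]} (hirr : ∀ i ∈ S, Irreducible (q i))
    (hcop : (S : Set ι).Pairwise (IsCoprime on q))
    (hM : IsTorsionBy k[X] M (∏ i ∈ S, q i)) (hN : IsTorsionBy k[X] N (∏ i ∈ S, q i))
    (h : ∀ i ∈ S, finrank k (torsionBy k[X] M (q i)) = finrank k (torsionBy k[X] N (q i))) :
    Nonempty (M ≃ₗ[k[X]] N) := by
  have e (i : S) := (nonempty_linearEquiv_torsionBy_of_irreducible (hirr i i.2) (h i i.2)).some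
  have dM := LinearEquiv.ofBijective (DirectSum.coeLinearMap _) (torsionBy_isInternal hcop hM)
  have dN := LinearEquiv.ofBijective (DirectSum.coeLinearMap _) (torsionBy_isInternal hcop hN)
  exact ⟨dM.symm.trans ((DFinsupp.mapRange.linearEquiv e).trans dN)⟩

end TorsionModules

section Endomorphisms

variable {k V W : Type*} [Field k] [AddCommGroup V] [Module k V] [AddCommGroup W] [Module k W]

theorem Module.AEval'.of_mem_torsionBy_iff (A : End k V) (p : k[X]) (v : V) :
    AEval'.of A v ∈ torsionBy k[X] (AEval' A) p ↔ v ∈ LinearMap.ker (aeval A p) := by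
  rw [Submodule.mem_torsionBy_iff, ← AEval.of_aeval_smul, LinearEquiv.map_eq_zero_iff]
  rfl

theorem Module.AEval'.isTorsionBy_of_aeval_eq_zero {A : End k V} {p : k[X]}
    (hp : aeval A p = 0) : IsTorsionBy k[X] (AEval' A) p := fun v ↦ by
  rw [← (AEval'.of A).apply_symm_apply v, ← AEval.of_aeval_smul, hp]
  simp

theorem Module.AEval'.finrank_torsionBy (A : End k V) (p : k[X]) :
    finrank k (torsionBy k[X] (AEval' A) p) = finrank k (LinearMap.ker (aeval A p)) := by
  have : (LinearMap.ker (aeval A p)).map (AEval'.of A).toLinearMap =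
      (torsionBy k[X] (AEval' A) p).restrictScalars k := by
    ext x
    rw [← (AEval'.of A).apply_symm_apply x, mem_map_equiv, LinearEquiv.symm_apply_apply,
      restrictScalars_mem, AEval'.of_mem_torsionBy_iff]
  rw [(LinearEquiv.submoduleMap (AEval'.of A) _).finrank_eq, this]
  rfl

theorem exists_linearEquiv_semiconj_of_finrank_ker_aeval_eq [FiniteDimensional k V]
    [FiniteDimensional k W] (A : End k V) (B : End k W) {ι : Type*} [DecidableEq ι]
    {S : Finset ι} {q : ι → k[X]} (hirr : ∀ i ∈ S, Irreducible (q i))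
    (hcop : (S : Set ι).Pairwise (IsCoprime on q))
    (hA : aeval A (∏ i ∈ S, q i) = 0) (hB : aeval B (∏ i ∈ S, q i) = 0)
    (h : ∀ i ∈ S, finrank k (LinearMap.ker (aeval A (q i))) =
      finrank k (LinearMap.ker (aeval B (q i)))) :
    ∃ e : V ≃ₗ[k] W, ∀ v, e (A v) = B (e v) := by
  obtain ⟨E⟩ := nonempty_linearEquiv_of_isTorsionBy_prod hirr hcop
    (AEval'.isTorsionBy_of_aeval_eq_zero hA) (AEval'.isTorsionBy_of_aeval_eq_zero hB)
    fun i hi ↦ by rw [AEval'.finrank_torsionBy, AEval'.finrank_torsionBy, h i hi]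
  refine ⟨(AEval'.of A).trans ((E.restrictScalars k).trans (AEval'.of B).symm), fun v ↦ ?_⟩
  simp [← AEval'.X_smul_of]

end Endomorphisms

namespace Representation

variable {k G V W : Type*} [CommRing k] [Group G] [AddCommGroup V] [Module k V]
  [AddCommGroup W] [Module k W]

theorem zpow_apply_eq_self (ρ : Representation k G V) {g : G} {v : V} (h : ρ g v = v) (n : ℤ) :
    ρ (g ^ n) v = v := by
  induction n using Int.induction_on with
  | zero => simp
  | succ n ih => rw [zpow_add_one, map_mul, Module.End.mul_apply, h, ih]
  | pred n ih =>
    calc ρ (g ^ (-n - 1 : ℤ)) v = ρ (g ^ (-n - 1 : ℤ)) (ρ g v) := by rw [h]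
      _ = v := by rw [← Module.End.mul_apply, ← map_mul, ← zpow_add_one, sub_add_cancel, ih]

theorem linHom_apply_eq_self_iff (ρV : Representation k G V) (ρW : Representation k G W)
    (g : G) (f : V →ₗ[k] W) : linHom ρV ρW g f = f ↔ f ∘ₗ ρV g = ρW g ∘ₗ f := by
  rw [linHom_apply]
  constructor
  · intro h
    nth_rewrite 1 [← h]
    ext v
    simp
  · intro h
    rw [← LinearMap.comp_assoc, ← h]
    ext v
    simp

theorem comp_zpow_eq (ρV : Representation k G V) (ρW : Representation k G W)
    {f : V →ₗ[k] W} {g : G} (h : f ∘ₗ ρV g = ρW g ∘ₗ f) (n : ℤ) :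
    f ∘ₗ ρV (g ^ n) = ρW (g ^ n) ∘ₗ f :=
  (linHom_apply_eq_self_iff ..).mp <|
    (linHom ρV ρW).zpow_apply_eq_self ((linHom_apply_eq_self_iff ..).mpr h) n

theorem aeval_X_pow_sub_one (ρ : Representation k G V) (g : G) (n : ℕ) :
    aeval (ρ g) (X ^ n - 1 : k[X]) = ρ (g ^ n) - 1 := by
  simp

end Representation

theorem fixedSubspace_zpowers {k G V : Type} [CommRing k] [Group G] [AddCommGroup V]
    [Module k V] (ρ : Representation k G V) (g : G) :
    fixedSubspace ρ (Subgroup.zpowers g) = LinearMap.ker (ρ g - 1) := by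
  ext v
  simp only [fixedSubspace, mem_iInf, Subgroup.forall_mem_zpowers, LinearMap.mem_ker,
    LinearMap.sub_apply, LinearMap.id_apply, Module.End.one_apply, sub_eq_zero]
  exact ⟨fun h ↦ by simpa using h 1, ρ.zpow_apply_eq_self⟩

/-- Let `G` be a cyclic group of order `ℓ^m` and `V`, `W` two
finite-dimensional `ℚ_ℓ`-representations of `G`.  If `dim V^H = dim W^H` for every
subgroup `H` of `G`, then `V ≅ W` as `ℚ_ℓ`-representations of `G`. -/
theorem stmt13 (ℓ : ℕ) [Fact ℓ.Prime] (m : ℕ)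
    (G : Type) [Group G] [IsCyclic G] (hcard : Nat.card G = ℓ ^ m)
    (V W : Type) [AddCommGroup V] [Module ℚ_[ℓ] V] [FiniteDimensional ℚ_[ℓ] V]
    [AddCommGroup W] [Module ℚ_[ℓ] W] [FiniteDimensional ℚ_[ℓ] W]
    (ρV : Representation ℚ_[ℓ] G V) (ρW : Representation ℚ_[ℓ] G W)
    (hdim : ∀ H : Subgroup G,
      Module.finrank ℚ_[ℓ] ↥(fixedSubspace ρV H) =
        Module.finrank ℚ_[ℓ] ↥(fixedSubspace ρW H)) :
    ∃ e : V ≃ₗ[ℚ_[ℓ]] W, ∀ (g : G) (v : V), e (ρV g v) = ρW g (e v) := by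
  obtain ⟨g, hg⟩ := IsCyclic.exists_generator (α := G)
  have hgm : g ^ ℓ ^ m = 1 := hcard ▸ pow_card_eq_one'
  have hfix (j : ℕ) : finrank ℚ_[ℓ] (LinearMap.ker (aeval (ρV g) (X ^ ℓ ^ j - 1 : ℚ_[ℓ][X]))) =
      finrank ℚ_[ℓ] (LinearMap.ker (aeval (ρW g) (X ^ ℓ ^ j - 1 : ℚ_[ℓ][X]))) := by
    rw [ρV.aeval_X_pow_sub_one, ρW.aeval_X_pow_sub_one, ← fixedSubspace_zpowers,
      ← fixedSubspace_zpowers]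
    exact hdim _
  obtain ⟨e, he⟩ := exists_linearEquiv_semiconj_of_finrank_ker_aeval_eq (ρV g) (ρW g)
    (S := Finset.range (m + 1)) (q := fun i ↦ cyclotomic (ℓ ^ i) ℚ_[ℓ])
    (fun i _ ↦ irreducible_cyclotomic_prime_pow_of_prime (R := ℤ_[ℓ]) ℓ PadicInt.prime_p i)
    ((pairwise_isCoprime_cyclotomic_pow (Fact.out : ℓ.Prime).two_le).set_pairwise _)
    (by rw [prod_range_cyclotomic_prime_pow, ρV.aeval_X_pow_sub_one, hgm, map_one, sub_self])
    (by rw [prod_range_cyclotomic_prime_pow, ρW.aeval_X_pow_sub_one, hgm, map_one, sub_self])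
    fun i _ ↦ finrank_ker_aeval_cyclotomic_prime_pow_eq _ _ ℓ hfix i
  refine ⟨e, fun x v ↦ ?_⟩
  obtain ⟨n, rfl⟩ := Subgroup.mem_zpowers_iff.mp (hg x)
  exact LinearMap.congr_fun (ρV.comp_zpow_eq ρW (f := e.toLinearMap) (LinearMap.ext he) n) v
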